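/- (Theorem: entirely new system.) Let A be a system and B a disjoint system in the universe U with a bijection f : A → B (B is an entirely new system having no relation to A), suppose H(A ∪ B) = H(A) + H(B) and I_{A∪B} is nonnegative. Then for every scale k ≥ 1, the complexity of the noise equals the complexity of the new system: C_{B|A}(k) = C_B(k). -/
import Mathlib


open Finset

variable {U : Type*}

/-- `I` solves the defining linear system of the information function of the system `A`
(with entropy function `H`): for every nonempty `B ⊆ A`, the sum of `I S` over all
nonempty `S ⊆ A` with `S ∩ B ≠ ∅` equals `H B`. -/
def IsInfoFn [DecidableEq U] (H : Finset U → ℝ) (A : Finset U) (I : Finset U → ℝ) : Prop :=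
  ∀ B : Finset U, B ⊆ A → B.Nonempty →
    ∑ S ∈ A.powerset.filter (fun S => S.Nonempty ∧ (S ∩ B).Nonempty), I S = H B

/-- The complexity of the system `A` at scale `k` (with information function `I`):
the sum of `I S` over all nonempty `S ⊆ A` with `|S| ≥ k`. -/
def complexityAt (A : Finset U) (I : Finset U → ℝ) (k : ℕ) : ℝ :=
  ∑ S ∈ A.powerset.filter (fun S => S.Nonempty ∧ k ≤ S.card), I S

/-- Conditional information `I(f(S)|S)` of a dependency `S` of `A`, relative to the primed
system `A'` with priming map `f`, computed with the information function `IJ` of the joint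
system `A ∪ A'`: the sum of `IJ T` over all nonempty `T ⊆ A ∪ A'` with `T ∩ A' = f(S)`
and `T ∩ A ≠ S`. -/
def condInfo [DecidableEq U] (A A' : Finset U) (f : U → U) (IJ : Finset U → ℝ)
    (S : Finset U) : ℝ :=
  ∑ T ∈ (A ∪ A').powerset.filter
      (fun T => T.Nonempty ∧ T ∩ A' = S.image f ∧ T ∩ A ≠ S), IJ T

/-- The noise complexity `C_{A'|A}(k)`: the sum of the conditional informations
`I(f(S)|S)` over all nonempty `S ⊆ A` with `|S| ≥ k`. -/
def noiseComplexityAt [DecidableEq U] (A A' : Finset U) (f : U → U) (IJ : Finset U → ℝ)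
    (k : ℕ) : ℝ :=
  ∑ S ∈ A.powerset.filter (fun S => S.Nonempty ∧ k ≤ S.card), condInfo A A' f IJ S

lemma total_sum [DecidableEq U] {H : Finset U → ℝ} {Bs : Finset U} {I : Finset U → ℝ}
    (h : IsInfoFn H Bs I) (hBs : Bs.Nonempty) :
    ∑ S ∈ Bs.powerset.filter (fun S => S.Nonempty), I S = H Bs := by
  have := h Bs (Finset.Subset.refl _) hBs
  rw [← this]
  apply Finset.sum_congr _ (fun _ _ => rfl)
  apply Finset.filter_congr
  intro S hS
  rw [Finset.mem_powerset] at hS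
  rw [Finset.inter_eq_left.mpr hS]
  tauto

lemma cross_zero [DecidableEq U] {H : Finset U → ℝ} {A B : Finset U}
    (hindep : H (A ∪ B) = H A + H B)
    {IJ : Finset U → ℝ} (hIJ : IsInfoFn H (A ∪ B) IJ)
    (hnn : ∀ T : Finset U, T ⊆ A ∪ B → T.Nonempty → 0 ≤ IJ T) :
    ∀ T : Finset U, T ⊆ A ∪ B → (T ∩ A).Nonempty → (T ∩ B).Nonempty → IJ T = 0 := by
  rcases A.eq_empty_or_nonempty with rfl | hA
  · intro T _ hTA _; simp at hTA
  rcases B.eq_empty_or_nonempty with rfl | hB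
  · intro T _ _ hTB; simp at hTB
  intro T hT hTA hTB
  set s0 := (A ∪ B).powerset.filter (fun S => S.Nonempty) with hs0
  have hsum : ∑ T ∈ s0.filter (fun T => (T ∩ A).Nonempty ∧ (T ∩ B).Nonempty), IJ T = 0 := by
    have h1 := hIJ A Finset.subset_union_left hA
    have h2 := hIJ B Finset.subset_union_right hB
    have h3 := total_sum hIJ (hA.mono Finset.subset_union_left)
    have hui := Finset.sum_union_inter (s₁ := s0.filter (fun T => (T ∩ A).Nonempty))
      (s₂ := s0.filter (fun T => (T ∩ B).Nonempty)) (f := IJ)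
    rw [← Finset.filter_or, ← Finset.filter_and] at hui
    have hor : s0.filter (fun T => (T ∩ A).Nonempty ∨ (T ∩ B).Nonempty) = s0 := by
      apply Finset.filter_true_of_mem
      intro T hT'
      rw [hs0, Finset.mem_filter, Finset.mem_powerset] at hT'
      obtain ⟨x, hx⟩ := hT'.2
      rcases Finset.mem_union.mp (hT'.1 hx) with h | h
      · exact Or.inl ⟨x, Finset.mem_inter.mpr ⟨hx, h⟩⟩
      · exact Or.inr ⟨x, Finset.mem_inter.mpr ⟨hx, h⟩⟩
    have e1 : s0.filter (fun T => (T ∩ A).Nonempty)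
        = (A ∪ B).powerset.filter (fun S => S.Nonempty ∧ (S ∩ A).Nonempty) := by
      rw [hs0, Finset.filter_filter]
    have e2 : s0.filter (fun T => (T ∩ B).Nonempty)
        = (A ∪ B).powerset.filter (fun S => S.Nonempty ∧ (S ∩ B).Nonempty) := by
      rw [hs0, Finset.filter_filter]
    rw [hor, e1, e2, h1, h2, h3] at hui
    linarith
  have hnn' : ∀ T ∈ s0.filter (fun T => (T ∩ A).Nonempty ∧ (T ∩ B).Nonempty), 0 ≤ IJ T := by
    intro T hT'
    rw [Finset.mem_filter, hs0, Finset.mem_filter, Finset.mem_powerset] at hT'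
    exact hnn T hT'.1.1 hT'.1.2
  have := (Finset.sum_eq_zero_iff_of_nonneg hnn').mp hsum
  apply this
  rw [Finset.mem_filter, hs0, Finset.mem_filter, Finset.mem_powerset]
  exact ⟨⟨hT, hTA.mono Finset.inter_subset_left⟩, hTA, hTB⟩

lemma restrict_info [DecidableEq U] {H : Finset U → ℝ} {A B : Finset U}
    (hdisj : Disjoint A B) (hindep : H (A ∪ B) = H A + H B)
    {IJ : Finset U → ℝ} (hIJ : IsInfoFn H (A ∪ B) IJ)
    (hnn : ∀ T : Finset U, T ⊆ A ∪ B → T.Nonempty → 0 ≤ IJ T) :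
    IsInfoFn H B IJ := by
  intro B' hB' hB'ne
  have h := hIJ B' (hB'.trans Finset.subset_union_right) hB'ne
  have hsplit := Finset.sum_filter_add_sum_filter_not
    ((A ∪ B).powerset.filter (fun S => S.Nonempty ∧ (S ∩ B').Nonempty))
    (fun S => (S ∩ A).Nonempty) IJ
  have hzero : ∑ T ∈ ((A ∪ B).powerset.filter (fun S => S.Nonempty ∧ (S ∩ B').Nonempty)).filter
      (fun S => (S ∩ A).Nonempty), IJ T = 0 := by
    apply Finset.sum_eq_zero
    intro T hT
    rw [Finset.mem_filter, Finset.mem_filter, Finset.mem_powerset] at hT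
    exact cross_zero hindep hIJ hnn T hT.1.1 hT.2
      ((hT.1.2.2).mono (Finset.inter_subset_inter (le_refl T) hB'))
  have hset : ((A ∪ B).powerset.filter (fun S => S.Nonempty ∧ (S ∩ B').Nonempty)).filter
      (fun S => ¬(S ∩ A).Nonempty)
      = B.powerset.filter (fun S => S.Nonempty ∧ (S ∩ B').Nonempty) := by
    ext T
    simp only [Finset.mem_filter, Finset.mem_powerset, Finset.not_nonempty_iff_eq_empty,
      ← Finset.disjoint_iff_inter_eq_empty]
    constructor
    · rintro ⟨⟨hTAB, hTprop⟩, hd⟩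
      refine ⟨fun x hx => ?_, hTprop⟩
      rcases Finset.mem_union.mp (hTAB hx) with h' | h'
      · exact absurd h' (Finset.disjoint_left.mp hd hx)
      · exact h'
    · rintro ⟨hTB, hTprop⟩
      exact ⟨⟨hTB.trans Finset.subset_union_right, hTprop⟩,
        Finset.disjoint_left.mpr (fun x hx hxA => Finset.disjoint_left.mp hdisj hxA (hTB hx))⟩
  rw [hzero, hset, h] at hsplit
  linarith
lemma restrict_sum [DecidableEq U] {H : Finset U → ℝ} {Bs : Finset U} {I : Finset U → ℝ}
    (h : IsInfoFn H Bs I) {C : Finset U} (hC : C ⊆ Bs) (hCne : C ≠ Bs) :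
    ∑ S ∈ C.powerset.filter (fun S => S.Nonempty), I S = H Bs - H (Bs \ C) := by
  have hBC : (Bs \ C).Nonempty := by
    rw [Finset.sdiff_nonempty]; intro hle; exact hCne (Finset.Subset.antisymm hC hle)
  have hBs : Bs.Nonempty := hBC.mono (Finset.sdiff_subset)
  have htot := total_sum h hBs
  have hpart := h (Bs \ C) Finset.sdiff_subset hBC
  have hsplit := Finset.sum_filter_add_sum_filter_not
    (Bs.powerset.filter (fun S => S.Nonempty)) (fun S => (S ∩ (Bs \ C)).Nonempty) I
  rw [Finset.filter_filter, Finset.filter_filter] at hsplit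
  rw [hpart] at hsplit
  have hset : Finset.filter (fun S => S.Nonempty ∧ ¬(S ∩ (Bs \ C)).Nonempty) Bs.powerset
      = C.powerset.filter (fun S => S.Nonempty) := by
    ext S
    simp only [Finset.mem_filter, Finset.mem_powerset, Finset.not_nonempty_iff_eq_empty,
      ← Finset.disjoint_iff_inter_eq_empty]
    constructor
    · rintro ⟨hSB, hSne, hd⟩
      refine ⟨fun x hx => ?_, hSne⟩
      have hxB := hSB hx
      by_contra hxC
      exact (Finset.disjoint_left.mp hd hx) (Finset.mem_sdiff.mpr ⟨hxB, hxC⟩)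
    · rintro ⟨hSC, hSne⟩
      exact ⟨hSC.trans hC, hSne, Finset.disjoint_left.mpr
        (fun x hx hx' => (Finset.mem_sdiff.mp hx').2 (hSC hx))⟩
  rw [hset, htot] at hsplit
  linarith

lemma infoFn_unique [DecidableEq U] {H : Finset U → ℝ} {Bs : Finset U}
    {I1 I2 : Finset U → ℝ} (h1 : IsInfoFn H Bs I1) (h2 : IsInfoFn H Bs I2) :
    ∀ S : Finset U, S ⊆ Bs → S.Nonempty → I1 S = I2 S := by
  have key : ∀ C : Finset U, C ⊆ Bs →
      ∑ S ∈ C.powerset.filter (fun S => S.Nonempty), I1 S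
        = ∑ S ∈ C.powerset.filter (fun S => S.Nonempty), I2 S := by
    intro C hC
    by_cases hCne : C = Bs
    · subst hCne
      rcases C.eq_empty_or_nonempty with rfl | hne
      · simp [Finset.filter_singleton]
      · rw [total_sum h1 hne, total_sum h2 hne]
    · rw [restrict_sum h1 hC hCne, restrict_sum h2 hC hCne]
  intro S
  induction S using Finset.strongInduction with
  | _ S ih =>
    intro hS hSne
    have hmem : S ∈ S.powerset.filter (fun S => S.Nonempty) := by
      simp [Finset.mem_powerset, hSne]
    have e1 := Finset.add_sum_erase _ I1 hmem
    have e2 := Finset.add_sum_erase _ I2 hmem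
    have herase : ∑ T ∈ (S.powerset.filter (fun S => S.Nonempty)).erase S, I1 T
        = ∑ T ∈ (S.powerset.filter (fun S => S.Nonempty)).erase S, I2 T := by
      apply Finset.sum_congr rfl
      intro T hT
      rw [Finset.mem_erase, Finset.mem_filter, Finset.mem_powerset] at hT
      exact ih T (lt_of_le_of_ne hT.2.1 hT.1) (hT.2.1.trans hS) hT.2.2
    have := key S hS
    rw [← e1, ← e2, herase] at this
    linarith

/-- entirely new system. If `B` is a disjoint system unrelated to `A`
(`H(A ∪ B) = H A + H B`), with priming bijection `f : A → B`, the joint information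
function is nonnegative, and `I_B` is the information function of `B`, then for every
scale `k ≥ 1` the complexity of the noise equals the complexity of the new system:
`C_{B|A}(k) = C_B(k)`. -/
theorem noiseComplexity_of_new_system [Fintype U] [DecidableEq U]
    (H : Finset U → ℝ) (A B : Finset U) (hdisj : Disjoint A B)
    (f : U → U) (hf : Set.BijOn f ↑A ↑B)
    (hindep : H (A ∪ B) = H A + H B)
    (IJ : Finset U → ℝ) (hIJ : IsInfoFn H (A ∪ B) IJ)
    (hnn : ∀ T : Finset U, T ⊆ A ∪ B → T.Nonempty → 0 ≤ IJ T)
    (IB : Finset U → ℝ) (hIB : IsInfoFn H B IB)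
    (k : ℕ) (hk : 1 ≤ k) :
    noiseComplexityAt A B f IJ k = complexityAt B IB k := by
  

  -- B is the image of A
  have hnn' := hnn
  have hIJB : IsInfoFn H B IJ := restrict_info hdisj hindep hIJ hnn
  have heq : ∀ S : Finset U, S ⊆ B → S.Nonempty → IJ S = IB S :=
    infoFn_unique hIJB hIB
  have hmapsto : ∀ S : Finset U, S ⊆ A → S.image f ⊆ B := by
    intro S hS x hx
    obtain ⟨a, ha, rfl⟩ := Finset.mem_image.mp hx
    exact hf.mapsTo (hS ha)
  unfold noiseComplexityAt complexityAt
  have hstep : ∀ S ∈ A.powerset.filter (fun S => S.Nonempty ∧ k ≤ S.card),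
      condInfo A B f IJ S = IB (S.image f) := by
    intro S hS
    rw [Finset.mem_filter, Finset.mem_powerset] at hS
    obtain ⟨hSA, hSne, hSk⟩ := hS
    have himg : S.image f ⊆ B := hmapsto S hSA
    have himgne : (S.image f).Nonempty := hSne.image f
    have hinterB : S.image f ∩ B = S.image f := Finset.inter_eq_left.mpr himg
    have hinterA : S.image f ∩ A = ∅ := by
      rw [← Finset.disjoint_iff_inter_eq_empty]
      exact (hdisj.symm.mono_left himg)
    unfold condInfo
    have := Finset.sum_eq_single_of_mem (s :=
      (A ∪ B).powerset.filter
        (fun T => T.Nonempty ∧ T ∩ B = S.image f ∧ T ∩ A ≠ S)) (f := IJ) (S.image f) ?_ ?_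
    · rw [this]
      exact heq _ himg himgne
    · rw [Finset.mem_filter, Finset.mem_powerset]
      refine ⟨himg.trans Finset.subset_union_right, himgne, hinterB, ?_⟩
      rw [hinterA]
      intro h; exact hSne.ne_empty h.symm
    · intro T hT hTne
      rw [Finset.mem_filter, Finset.mem_powerset] at hT
      obtain ⟨hTAB, _, hTB, hTA⟩ := hT
      by_cases hA : (T ∩ A).Nonempty
      · exact cross_zero hindep hIJ hnn' T hTAB hA (hTB ▸ himgne)
      · exfalso
        apply hTne
        rw [Finset.not_nonempty_iff_eq_empty, ← Finset.disjoint_iff_inter_eq_empty] at hA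
        have hTsubB : T ⊆ B := by
          intro x hx
          rcases Finset.mem_union.mp (hTAB hx) with h | h
          · exact absurd h (Finset.disjoint_left.mp hA hx)
          · exact h
        rw [← hTB, Finset.inter_eq_left.mpr hTsubB]
  rw [Finset.sum_congr rfl hstep]
  -- reindex by image
  apply Finset.sum_bij (i := fun S _ => S.image f)
  · intro S hS
    rw [Finset.mem_filter, Finset.mem_powerset] at hS ⊢
    obtain ⟨hSA, hSne, hSk⟩ := hS
    refine ⟨hmapsto S hSA, hSne.image f, ?_⟩
    rw [Finset.card_image_of_injOn (hf.injOn.mono (by exact_mod_cast hSA))]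
    exact hSk
  · intro S1 hS1 S2 hS2 himg
    rw [Finset.mem_filter, Finset.mem_powerset] at hS1 hS2
    have : (f '' ↑S1 : Set U) = f '' ↑S2 := by
      rw [← Finset.coe_image, ← Finset.coe_image, himg]
    have := (hf.injOn.image_eq_image_iff (by exact_mod_cast hS1.1)
      (by exact_mod_cast hS2.1)).mp this
    exact_mod_cast this
  · intro T hT
    rw [Finset.mem_filter, Finset.mem_powerset] at hT
    obtain ⟨hTB, hTne, hTk⟩ := hT
    refine ⟨A.filter (fun a => f a ∈ T), ?_, ?_⟩
    · have himg : (A.filter (fun a => f a ∈ T)).image f = T := by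
        apply Finset.Subset.antisymm
        · intro x hx
          obtain ⟨a, ha, rfl⟩ := Finset.mem_image.mp hx
          exact (Finset.mem_filter.mp ha).2
        · intro t ht
          obtain ⟨a, haA, hfa⟩ := hf.surjOn (hTB ht)
          rw [Finset.mem_coe] at haA
          exact Finset.mem_image.mpr ⟨a, Finset.mem_filter.mpr ⟨haA, hfa ▸ ht⟩, hfa⟩
      rw [Finset.mem_filter, Finset.mem_powerset]
      refine ⟨Finset.filter_subset _ _, ?_, ?_⟩
      · obtain ⟨t, ht⟩ := hTne
        rw [← himg] at ht
        obtain ⟨a, ha, _⟩ := Finset.mem_image.mp ht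
        exact ⟨a, ha⟩
      · calc k ≤ T.card := hTk
          _ = ((A.filter (fun a => f a ∈ T)).image f).card := by rw [himg]
          _ ≤ (A.filter (fun a => f a ∈ T)).card := Finset.card_image_le
    · have himg : (A.filter (fun a => f a ∈ T)).image f = T := by
        apply Finset.Subset.antisymm
        · intro x hx
          obtain ⟨a, ha, rfl⟩ := Finset.mem_image.mp hx
          exact (Finset.mem_filter.mp ha).2
        · intro t ht
          obtain ⟨a, haA, hfa⟩ := hf.surjOn (hTB ht)
          rw [Finset.mem_coe] at haA
          exact Finset.mem_image.mpr ⟨a, Finset.mem_filter.mpr ⟨haA, hfa ▸ ht⟩, hfa⟩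
      exact himg
  · intro S hS
    rfl
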